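/- Let H be a separable real Hilbert space with orthonormal basis (e_i), and let D = {±e_i} be the symmetrized basis dictionary. Let C = (c_p) be positive coefficients with ∑ c_p = ∞ and c_p → 0. Then for every f ∈ H, every greedy expansion of f with prescribed coefficients C and weakening parameter t ≤ 1 with respect to D has remainders satisfying liminf_{n→∞} ‖f_n‖ = 0. -/

import Mathlib

/-!
Write `σ m` for `sup_{g ∈ D} ⟪F m, g⟫`. For any dictionary of unit vectors,
`‖F (m + 1)‖² ≤ ‖F m‖² - c m (2 ⟪F m, φ m⟫ - c m)`, so if `σ m ≥ δ` for all large `m`, the energy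
would eventually drop by `t δ c m` per step, which `∑ c m = ∞` forbids: `σ` is frequently small.

For the basis dictionary, step `m` changes only the coordinate `idx m`. Suppose `‖F m‖ ≥ δ` for
all `m`. Take a finite `S` carrying all but `δ²/2` of `‖F 0‖²` and put
`U m = S ∪ {idx p | p < m}`. Off `U m` the coordinates of `F m` are those of `F 0`, hence
`δ²/2 ≤ σ m² (#U m + 1)`. At a step with `idx m ∉ U m` the chosen coordinate is still the original
one, so `t² σ m² ≤ ⟪F 0, e (idx m)⟫²`, and these indices are distinct; by Bessel the sum of
`1 / (#U m + 1)` over such steps is bounded. As `#U` grows by one exactly at these steps, that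
sum is a harmonic partial sum up to `#U m`, so `#U` stays bounded and `σ` is bounded below,
contradicting the first part (after a shift of time).
-/

open RealInnerProductSpace Filter Finset

theorem not_eventually_add_mul_le {u c : ℕ → ℝ} {ε : ℝ} (hu : ∀ n, 0 ≤ u n) (hε : 0 < ε)
    (hc : Tendsto (fun n => ∑ p ∈ range n, c p) atTop atTop) :
    ¬ ∀ᶠ n in atTop, u (n + 1) + ε * c n ≤ u n := by
  intro h
  obtain ⟨N, hN⟩ := eventually_atTop.1 h
  have hdecr : ∀ n ≥ N, u n + ε * ∑ p ∈ range n, c p ≤ u N + ε * ∑ p ∈ range N, c p := by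
    intro n hn
    induction n, hn using Nat.le_induction with
    | base => rfl
    | succ n hn ih =>
      rw [sum_range_succ, mul_add]
      linarith [hN n hn]
  obtain ⟨n, hn, hNn⟩ := (((hc.const_mul_atTop hε).eventually_gt_atTop
    (u N + ε * ∑ p ∈ range N, c p)).and (eventually_ge_atTop N)).exists
  linarith [hdecr n hNn, hu n]

theorem liminf_eq_zero_of_frequently_lt {β : Type*} {l : Filter β} {u : β → ℝ}
    (hu : ∀ n, 0 ≤ u n) (h : ∀ δ > 0, ∃ᶠ n in l, u n < δ) : liminf u l = 0 := by
  have hcobdd : l.IsCoboundedUnder (· ≥ ·) u := ⟨1, fun a ha => by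
    obtain ⟨n, hn, han⟩ := ((h 1 one_pos).and_eventually ha).exists
    exact han.trans hn.le⟩
  refine le_antisymm (le_of_forall_pos_le_add fun δ hδ => ?_)
    (le_liminf_of_le hcobdd (.of_forall hu))
  exact liminf_le_of_frequently_le ((h δ hδ).mono fun n hn => by linarith)
    (isBoundedUnder_of ⟨0, hu⟩)

theorem sum_filter_inv_add_sum_range_eq {k : ℕ → ℕ}
    (hk : ∀ m, k (m + 1) = k m ∨ k (m + 1) = k m + 1) (n : ℕ) :
    ∑ m ∈ (range n).filter (fun m => k (m + 1) = k m + 1), (1 : ℝ) / (k m + 1) +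
      ∑ j ∈ range (k 0), (1 : ℝ) / (j + 1) = ∑ j ∈ range (k n), (1 : ℝ) / (j + 1) := by
  induction n with
  | zero => simp
  | succ n ih =>
    rw [range_add_one, filter_insert]
    rcases hk n with h | h
    · rw [if_neg (by omega), ih, h]
    · rw [if_pos h, sum_insert (by simp), h, sum_range_succ, ← ih]
      ring

theorem bddAbove_range_of_sum_filter_inv_le {k : ℕ → ℕ}
    (hk : ∀ m, k (m + 1) = k m ∨ k (m + 1) = k m + 1) {K : ℝ}
    (hK : ∀ n, ∑ m ∈ (range n).filter (fun m => k (m + 1) = k m + 1), (1 : ℝ) / (k m + 1) ≤ K) :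
    BddAbove (Set.range k) := by
  obtain ⟨M, hM⟩ := (Real.tendsto_sum_range_one_div_nat_succ_atTop.eventually_gt_atTop
    (K + ∑ j ∈ range (k 0), (1 : ℝ) / (j + 1))).exists
  refine ⟨M, ?_⟩
  rintro _ ⟨n, rfl⟩
  by_contra! hn
  have hmono : ∑ j ∈ range M, (1 : ℝ) / (j + 1) ≤ ∑ j ∈ range (k n), (1 : ℝ) / (j + 1) :=
    sum_le_sum_of_subset_of_nonneg (range_subset_range.2 hn.le) fun _ _ _ => by positivity
  linarith [sum_filter_inv_add_sum_range_eq hk n, hK n]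

section

variable {H : Type*} [NormedAddCommGroup H] [InnerProductSpace ℝ H]

noncomputable def supInner (D : Set H) (x : H) : ℝ :=
  sSup ((fun g => ⟪x, g⟫) '' D)

structure IsWeakGreedyExpansion (D : Set H) (c : ℕ → ℝ) (t : ℝ) (φ F : ℕ → H) : Prop where
  mem : ∀ m, φ m ∈ D
  le_inner : ∀ m, t * supInner D (F m) ≤ ⟪F m, φ m⟫
  succ : ∀ m, F (m + 1) = F m - c m • φ m

def symmetrizedDictionary {ι : Type*} (e : HilbertBasis ι ℝ H) : Set H :=
  Set.range e ∪ Set.range fun i => -e i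

variable {D : Set H} {c : ℕ → ℝ} {t : ℝ} {φ F : ℕ → H}

theorem IsWeakGreedyExpansion.shift (hG : IsWeakGreedyExpansion D c t φ F) (N : ℕ) :
    IsWeakGreedyExpansion D (fun m => c (N + m)) t (fun m => φ (N + m)) (fun m => F (N + m)) :=
  ⟨fun m => hG.mem (N + m), fun m => hG.le_inner (N + m), fun m => hG.succ (N + m)⟩

theorem norm_sub_smul_sq_le {g : H} (hg : ‖g‖ ≤ 1) (x : H) (a : ℝ) :
    ‖x - a • g‖ ^ 2 ≤ ‖x‖ ^ 2 - a * (2 * ⟪x, g⟫ - a) := by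
  have : a ^ 2 * ‖g‖ ^ 2 ≤ a ^ 2 :=
    mul_le_of_le_one_right (sq_nonneg a) (pow_le_one₀ (norm_nonneg g) hg)
  rw [norm_sub_sq_real, norm_smul, real_inner_smul_right, mul_pow, Real.norm_eq_abs, sq_abs]
  linarith

theorem IsWeakGreedyExpansion.frequently_supInner_lt (hG : IsWeakGreedyExpansion D c t φ F)
    (hD : ∀ g ∈ D, ‖g‖ ≤ 1) (hc : ∀ m, 0 ≤ c m)
    (hcdiv : Tendsto (fun n => ∑ p ∈ range n, c p) atTop atTop) (hc0 : Tendsto c atTop (nhds 0))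
    (ht : 0 < t) {δ : ℝ} (hδ : 0 < δ) : ∃ᶠ m in atTop, supInner D (F m) < δ := by
  by_contra h
  refine not_eventually_add_mul_le (u := fun m => ‖F m‖ ^ 2) (fun m => sq_nonneg _)
    (mul_pos ht hδ) hcdiv ?_
  filter_upwards [not_frequently.1 h, hc0.eventually (gt_mem_nhds (mul_pos ht hδ))] with m hσ hcm
  have hinner : t * δ ≤ ⟪F m, φ m⟫ :=
    (mul_le_mul_of_nonneg_left (not_lt.1 hσ) ht.le).trans (hG.le_inner m)
  have henergy := norm_sub_smul_sq_le (hD _ (hG.mem m)) (F m) (c m)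
  rw [← hG.succ m] at henergy
  show ‖F (m + 1)‖ ^ 2 + t * δ * c m ≤ ‖F m‖ ^ 2
  nlinarith [hc m]

section HilbertBasis

variable {ι : Type*} (e : HilbertBasis ι ℝ H)

theorem HilbertBasis.hasSum_inner_sq (x : H) : HasSum (fun i => ⟪x, e i⟫ ^ 2) (‖x‖ ^ 2) := by
  have := e.hasSum_inner_mul_inner x x
  simp_rw [real_inner_comm x (e _), ← sq, real_inner_self_eq_norm_sq] at this
  exact this

theorem HilbertBasis.norm_sq_sub_norm_sq_eq_sum {x y : H} {U : Finset ι}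
    (h : ∀ i ∉ U, ⟪x, e i⟫ = ⟪y, e i⟫) :
    ‖x‖ ^ 2 - ‖y‖ ^ 2 = ∑ i ∈ U, (⟪x, e i⟫ ^ 2 - ⟪y, e i⟫ ^ 2) :=
  ((e.hasSum_inner_sq x).sub (e.hasSum_inner_sq y)).unique
    (hasSum_sum_of_ne_finset_zero fun i hi => by rw [h i hi, sub_self])

theorem HilbertBasis.norm_sq_le_of_inner_eq_off {x y : H} {S U : Finset ι} (hSU : S ⊆ U)
    (h : ∀ i ∉ U, ⟪x, e i⟫ = ⟪y, e i⟫) {M : ℝ} (hM : ∀ i ∈ U, |⟪x, e i⟫| ≤ M) :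
    ‖x‖ ^ 2 ≤ ‖y‖ ^ 2 - ∑ i ∈ S, ⟪y, e i⟫ ^ 2 + #U * M ^ 2 := by
  have hx : ∑ i ∈ U, ⟪x, e i⟫ ^ 2 ≤ #U * M ^ 2 := by
    simpa using sum_le_card_nsmul U _ (M ^ 2) fun i hi =>
      sq_le_sq' (abs_le.1 (hM i hi)).1 (abs_le.1 (hM i hi)).2
  have hy : ∑ i ∈ S, ⟪y, e i⟫ ^ 2 ≤ ∑ i ∈ U, ⟪y, e i⟫ ^ 2 :=
    sum_le_sum_of_subset_of_nonneg hSU fun i _ _ => sq_nonneg _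
  have := e.norm_sq_sub_norm_sq_eq_sum h
  rw [sum_sub_distrib] at this
  linarith

theorem exists_eq_or_eq_neg_of_mem_symmetrizedDictionary {g : H}
    (hg : g ∈ symmetrizedDictionary e) : ∃ i, g = e i ∨ g = -e i := by
  rcases hg with ⟨i, rfl⟩ | ⟨i, rfl⟩
  exacts [⟨i, .inl rfl⟩, ⟨i, .inr rfl⟩]

theorem norm_le_one_of_mem_symmetrizedDictionary {g : H} (hg : g ∈ symmetrizedDictionary e) :
    ‖g‖ ≤ 1 := by
  obtain ⟨i, rfl | rfl⟩ := exists_eq_or_eq_neg_of_mem_symmetrizedDictionary e hg <;>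
    simp [e.orthonormal.1 i]

theorem abs_inner_le_supInner (x : H) (i : ι) :
    |⟪x, e i⟫| ≤ supInner (symmetrizedDictionary e) x := by
  have hbdd : BddAbove ((fun g => ⟪x, g⟫) '' symmetrizedDictionary e) := by
    refine ⟨‖x‖, ?_⟩
    rintro _ ⟨g, hg, rfl⟩
    exact (real_inner_le_norm x g).trans
      (mul_le_of_le_one_right (norm_nonneg x) (norm_le_one_of_mem_symmetrizedDictionary e hg))
  refine abs_le'.2 ⟨le_csSup hbdd ⟨e i, .inl ⟨i, rfl⟩, rfl⟩, ?_⟩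
  rw [← inner_neg_right]
  exact le_csSup hbdd ⟨-e i, .inr ⟨i, rfl⟩, rfl⟩

variable {idx : ℕ → ι}

namespace IsWeakGreedyExpansion

theorem inner_succ_of_ne (hG : IsWeakGreedyExpansion (symmetrizedDictionary e) c t φ F)
    (hidx : ∀ m, φ m = e (idx m) ∨ φ m = -e (idx m)) {m : ℕ} {i : ι} (hi : idx m ≠ i) :
    ⟪F (m + 1), e i⟫ = ⟪F m, e i⟫ := by
  have : ⟪φ m, e i⟫ = 0 := by
    rcases hidx m with h | h <;> simp [h, e.orthonormal.2 hi]
  rw [hG.succ, inner_sub_left, real_inner_smul_left, this, mul_zero, sub_zero]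

theorem inner_eq_of_notMem [DecidableEq ι]
    (hG : IsWeakGreedyExpansion (symmetrizedDictionary e) c t φ F)
    (hidx : ∀ m, φ m = e (idx m) ∨ φ m = -e (idx m)) {m : ℕ} {i : ι}
    (hi : i ∉ (range m).image idx) :
    ⟪F m, e i⟫ = ⟪F 0, e i⟫ := by
  induction m with
  | zero => rfl
  | succ m ih =>
    rw [range_add_one, image_insert, mem_insert, not_or] at hi
    rw [hG.inner_succ_of_ne e hidx (Ne.symm hi.1), ih hi.2]

theorem mul_supInner_le_abs_inner (hG : IsWeakGreedyExpansion (symmetrizedDictionary e) c t φ F)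
    (hidx : ∀ m, φ m = e (idx m) ∨ φ m = -e (idx m)) (m : ℕ) :
    t * supInner (symmetrizedDictionary e) (F m) ≤ |⟪F m, e (idx m)⟫| :=
  (hG.le_inner m).trans <| by rcases hidx m with h | h <;> simp [h, le_abs_self, neg_le_abs]

theorem one_div_card_add_one_le_inner_sq [DecidableEq ι]
    (hG : IsWeakGreedyExpansion (symmetrizedDictionary e) c t φ F)
    (hidx : ∀ m, φ m = e (idx m) ∨ φ m = -e (idx m)) (ht : 0 < t) {S : Finset ι} {η : ℝ}
    (hη : 0 < η) {m : ℕ}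
    (hmass : η ≤ supInner (symmetrizedDictionary e) (F m) ^ 2 *
      (#(S ∪ (range m).image idx) + 1))
    (hfresh : idx m ∉ S ∪ (range m).image idx) :
    1 / ((#(S ∪ (range m).image idx) : ℝ) + 1) ≤ ⟪F 0, e (idx m)⟫ ^ 2 / (η * t ^ 2) := by
  set σ := supInner (symmetrizedDictionary e) (F m)
  set k : ℝ := ((#(S ∪ (range m).image idx) : ℕ) : ℝ)
  have hσ : (t * σ) ^ 2 ≤ ⟪F 0, e (idx m)⟫ ^ 2 := by
    rw [← hG.inner_eq_of_notMem e hidx fun h => hfresh (mem_union_right _ h),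
      ← sq_abs ⟪F m, e (idx m)⟫]
    exact pow_le_pow_left₀ (mul_nonneg ht.le ((abs_nonneg _).trans
      (abs_inner_le_supInner e _ (idx m)))) (hG.mul_supInner_le_abs_inner e hidx m) 2
  rw [div_le_div_iff₀ (by positivity) (by positivity)]
  calc 1 * (η * t ^ 2) ≤ (t * σ) ^ 2 * (k + 1) := by nlinarith
    _ ≤ ⟪F 0, e (idx m)⟫ ^ 2 * (k + 1) := by gcongr

theorem bddAbove_card_union_image_range [DecidableEq ι]
    (hG : IsWeakGreedyExpansion (symmetrizedDictionary e) c t φ F)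
    (hidx : ∀ m, φ m = e (idx m) ∨ φ m = -e (idx m)) (ht : 0 < t) (S : Finset ι) {η : ℝ}
    (hη : 0 < η)
    (hmass : ∀ m, η ≤ supInner (symmetrizedDictionary e) (F m) ^ 2 *
      (#(S ∪ (range m).image idx) + 1)) :
    BddAbove (Set.range fun m => #(S ∪ (range m).image idx)) := by
  set U : ℕ → Finset ι := fun m => S ∪ (range m).image idx with hU
  have hU_succ : ∀ m, U (m + 1) = insert (idx m) (U m) := fun m => by
    simp only [hU, range_add_one, image_insert, union_insert]
  have hk : ∀ m, #(U (m + 1)) = #(U m) ∨ #(U (m + 1)) = #(U m) + 1 := fun m => by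
    by_cases h : idx m ∈ U m <;> simp [hU_succ, h, card_insert_of_notMem]
  have hjump : ∀ m, #(U (m + 1)) = #(U m) + 1 ↔ idx m ∉ U m := fun m => by
    by_cases h : idx m ∈ U m <;> simp [hU_succ, h, card_insert_of_notMem]
  have hfresh_inj : Set.InjOn idx {m | idx m ∉ U m} := by
    have key : ∀ m m', m < m' → idx m' ∉ U m' → idx m ≠ idx m' := fun m m' hlt h' heq =>
      h' (heq ▸ mem_union_right _ (mem_image_of_mem idx (mem_range.2 hlt)))
    intro m hm m' hm' heq
    by_contra hne
    rcases lt_or_gt_of_ne hne with hlt | hlt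
    exacts [key m m' hlt hm' heq, key m' m hlt hm heq.symm]
  refine bddAbove_range_of_sum_filter_inv_le hk (K := ‖F 0‖ ^ 2 / (η * t ^ 2)) fun n => ?_
  rw [filter_congr fun m _ => hjump m]
  calc _ ≤ ∑ m ∈ (range n).filter (fun m => idx m ∉ U m), ⟪F 0, e (idx m)⟫ ^ 2 / (η * t ^ 2) :=
        sum_le_sum fun m hm =>
          hG.one_div_card_add_one_le_inner_sq e hidx ht hη (hmass m) (mem_filter.1 hm).2
    _ = (∑ i ∈ ((range n).filter (fun m => idx m ∉ U m)).image idx, ⟪F 0, e i⟫ ^ 2) /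
        (η * t ^ 2) := by
      rw [sum_div, sum_image]
      exact hfresh_inj.mono fun m hm => (mem_filter.1 hm).2
    _ ≤ ‖F 0‖ ^ 2 / (η * t ^ 2) := by
      gcongr
      exact sum_le_hasSum _ (fun _ _ => sq_nonneg _) (e.hasSum_inner_sq _)

theorem exists_pos_le_supInner
    (hG : IsWeakGreedyExpansion (symmetrizedDictionary e) c t φ F) (ht : 0 < t) {δ : ℝ}
    (hδ : 0 < δ) (hF : ∀ m, δ ≤ ‖F m‖) :
    ∃ ε > 0, ∀ m, ε ≤ supInner (symmetrizedDictionary e) (F m) := by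
  classical
  choose idx hidx using fun m => exists_eq_or_eq_neg_of_mem_symmetrizedDictionary e (hG.mem m)
  set σ := fun m => supInner (symmetrizedDictionary e) (F m)
  obtain ⟨S, hS⟩ := ((e.hasSum_inner_sq (F 0)).eventually
    (lt_mem_nhds (sub_lt_self _ (by positivity : 0 < δ ^ 2 / 2)))).exists
  have hmass : ∀ m, δ ^ 2 / 2 ≤ σ m ^ 2 * (#(S ∪ (range m).image idx) + 1) := by
    intro m
    have := e.norm_sq_le_of_inner_eq_off (S := S) (U := S ∪ (range m).image idx)
      subset_union_left
      (fun i hi => hG.inner_eq_of_notMem e hidx fun h => hi (mem_union_right _ h))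
      (fun i _ => abs_inner_le_supInner e (F m) i)
    nlinarith [pow_le_pow_left₀ hδ.le (hF m) 2, sq_nonneg (σ m)]
  obtain ⟨B, hB⟩ := hG.bddAbove_card_union_image_range e hidx ht S (by positivity) hmass
  refine ⟨√(δ ^ 2 / 2 / (B + 1)), Real.sqrt_pos.2 (by positivity), fun m => ?_⟩
  have hσ0 : 0 ≤ σ m := (abs_nonneg _).trans (abs_inner_le_supInner e (F m) (idx m))
  have hcard : (#(S ∪ (range m).image idx) : ℝ) + 1 ≤ B + 1 := by
    gcongr
    exact_mod_cast hB ⟨m, rfl⟩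
  refine (Real.sqrt_le_sqrt ?_).trans_eq (Real.sqrt_sq hσ0)
  rw [div_le_iff₀ (by positivity)]
  exact (hmass m).trans (mul_le_mul_of_nonneg_left hcard (sq_nonneg _))

end IsWeakGreedyExpansion

end HilbertBasis

end

theorem stmt_6_general (H : Type*) [NormedAddCommGroup H] [InnerProductSpace ℝ H]
    (e : HilbertBasis ℕ ℝ H)
    (D : Set H) (hD : D = Set.range (e : ℕ → H) ∪ Set.range (fun i => -(e i)))
    (c : ℕ → ℝ) (hc : ∀ p, 0 < c p)
    (hcdiv : Tendsto (fun n => ∑ p ∈ Finset.range n, c p) atTop atTop)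
    (hc0 : Tendsto c atTop (nhds 0))
    (t : ℝ) (ht0 : 0 < t)
    (φ F : ℕ → H)
    (hφD : ∀ m, φ m ∈ D)
    (hsel : ∀ m, t * sSup ((fun g => ⟪F m, g⟫) '' D) ≤ ⟪F m, φ m⟫)
    (hrec : ∀ m, F (m + 1) = F m - c m • φ m) :
    liminf (fun n => ‖F n‖) atTop = 0 := by
  subst hD
  have hG : IsWeakGreedyExpansion (symmetrizedDictionary e) c t φ F := ⟨hφD, hsel, hrec⟩
  refine liminf_eq_zero_of_frequently_lt (fun n => norm_nonneg _) fun δ hδ => ?_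
  by_contra hfar
  obtain ⟨N, hN⟩ := eventually_atTop.1 (not_frequently.1 hfar)
  obtain ⟨ε, hε, hσ⟩ := (hG.shift N).exists_pos_le_supInner e ht0 hδ fun m =>
    not_lt.1 (hN _ (Nat.le_add_right N m))
  obtain ⟨m, hm, hNm⟩ := ((hG.frequently_supInner_lt
    (fun _ => norm_le_one_of_mem_symmetrizedDictionary e) (fun m => (hc m).le) hcdiv hc0 ht0
    hε).and_eventually (eventually_ge_atTop N)).exists
  obtain ⟨k, rfl⟩ := Nat.exists_eq_add_of_le hNm
  exact (hσ k).not_gt hm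

theorem stmt_6 (H : Type*) [NormedAddCommGroup H] [InnerProductSpace ℝ H]
    (e : HilbertBasis ℕ ℝ H)
    (D : Set H) (hD : D = Set.range (e : ℕ → H) ∪ Set.range (fun i => -(e i)))
    (c : ℕ → ℝ) (hc : ∀ p, 0 < c p)
    (hcdiv : Tendsto (fun n => ∑ p ∈ Finset.range n, c p) atTop atTop)
    (hc0 : Tendsto c atTop (nhds 0))
    (t : ℝ) (ht0 : 0 < t) (ht1 : t ≤ 1)
    (f : H) (φ F : ℕ → H)
    (hφD : ∀ m, φ m ∈ D)
    (hF0 : F 0 = f)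
    (hsel : ∀ m, t * sSup ((fun g => ⟪F m, g⟫) '' D) ≤ ⟪F m, φ m⟫)
    (hrec : ∀ m, F (m + 1) = F m - c m • φ m) :
    liminf (fun n => ‖F n‖) atTop = 0 :=
  stmt_6_general H e D hD c hc hcdiv hc0 t ht0 φ F hφD hsel hrec
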